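/- Let (a_k)_{k≥1} be complex numbers with Σ_{k=1}^∞ (1+k)³ |a_k| < ∞, and let (c_k)_{k≥0} be defined from (a_k) by the MA recursion. Then Σ_{k=0}^∞ (1+k)³ |c_k| ≤ exp( Σ_{k=1}^∞ (1+k)³ |a_k| ); in particular sup_{k≥0} k³ |c_k| < ∞. -/

import Mathlib

/-!
The MA recursion is the coefficient form of `c' = A' c`, i.e. `c = exp A` for the generating
functions `A(z) = ∑ a_k z^k` and `c(z) = ∑ c_k z^k`. Because the weight `w k = (1 + k)³` is
submultiplicative, the majorants `d_k = w_k ‖c_k‖` and `b_k = w_k ‖a_k‖` satisfy the same relation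
as an inequality, coefficientwise: `D' ≤ B' D`. For the truncated polynomials this is a scalar
differential inequality on `[0, 1]`, and since `D e^{-B}` is antitone there,
`∑ d_k = D(1) ≤ D(0) e^{B(1)} = exp (∑ b_k)`.
-/

open Filter Topology

/-- The MA recursion: `c 0 = 1` and
`c (k+1) = ∑_{j=0}^{k} (1 - j/(k+1)) * a (k+1-j) * c j`. -/
def IsMARec (a c : ℕ → ℂ) : Prop :=
  c 0 = 1 ∧
    ∀ k : ℕ, c (k + 1) =
      ∑ j ∈ Finset.range (k + 1), (1 - (j : ℂ) / ((k : ℂ) + 1)) * a (k + 1 - j) * c j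

open Finset

lemma one_add_add_pow_le_mul {x y : ℝ} (hx : 0 ≤ x) (hy : 0 ≤ y) (n : ℕ) :
    (1 + (x + y)) ^ n ≤ (1 + x) ^ n * (1 + y) ^ n := by
  rw [← mul_pow]
  gcongr
  nlinarith [mul_nonneg hx hy]

lemma le_mul_exp_sub_of_deriv_le_mul {f f' g g' : ℝ → ℝ} {a b : ℝ} (hab : a ≤ b)
    (hf : ∀ t, HasDerivAt f (f' t) t) (hg : ∀ t, HasDerivAt g (g' t) t)
    (hle : ∀ t ∈ Set.Icc a b, f' t ≤ g' t * f t) :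
    f b ≤ f a * Real.exp (g b - g a) := by
  set φ : ℝ → ℝ := fun t => f t * Real.exp (-g t)
  have hφ : ∀ t, HasDerivAt φ ((f' t - g' t * f t) * Real.exp (-g t)) t := fun t =>
    ((hf t).mul (hg t).neg.exp).congr_deriv (by simp only [Pi.neg_apply]; ring)
  have hanti : AntitoneOn φ (Set.Icc a b) :=
    antitoneOn_of_hasDerivWithinAt_nonpos (convex_Icc a b)
      (fun t _ => (hφ t).continuousAt.continuousWithinAt)
      (fun t _ => (hφ t).hasDerivWithinAt)
      (fun t ht => mul_nonpos_of_nonpos_of_nonneg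
        (sub_nonpos.2 (hle t (interior_subset ht))) (Real.exp_pos _).le)
  have hφab := hanti (Set.left_mem_Icc.2 hab) (Set.right_mem_Icc.2 hab) hab
  calc f b = φ b * Real.exp (g b) := by simp [φ, mul_assoc, ← Real.exp_add]
    _ ≤ φ a * Real.exp (g b) := by gcongr
    _ = f a * Real.exp (g b - g a) := by
      simp only [φ, mul_assoc, ← Real.exp_add, sub_eq_neg_add]

-- `D' ≤ B' D` for `D = ∑ d k t^k` and `B = ∑ b m t^(m+1)`; so `b m` stands for `b_{m+1}`.
lemma sum_succ_mul_pow_le_mul_of_succ_mul_le {b d : ℕ → ℝ} (hb : ∀ m, 0 ≤ b m)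
    (hd : ∀ k, 0 ≤ d k)
    (hrec : ∀ k : ℕ, (k + 1) * d (k + 1) ≤
      ∑ j ∈ range (k + 1), ((k - j : ℕ) + 1) * b (k - j) * d j)
    (N : ℕ) {t : ℝ} (ht : 0 ≤ t) :
    ∑ k ∈ range N, (k + 1) * d (k + 1) * t ^ k ≤
      (∑ m ∈ range N, (m + 1) * b m * t ^ m) * ∑ j ∈ range (N + 1), d j * t ^ j := by
  have hterm : ∀ j m : ℕ, 0 ≤ (m + 1) * b m * t ^ m * (d j * t ^ j) := fun j m => by
    have := hb m; have := hd j; positivity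
  calc ∑ k ∈ range N, (k + 1) * d (k + 1) * t ^ k
      ≤ ∑ k ∈ range N, ∑ j ∈ range (k + 1),
          ((k - j : ℕ) + 1) * b (k - j) * t ^ (k - j) * (d j * t ^ j) := by
        refine sum_le_sum fun k _ => ?_
        calc (k + 1) * d (k + 1) * t ^ k
            ≤ (∑ j ∈ range (k + 1), ((k - j : ℕ) + 1) * b (k - j) * d j) * t ^ k := by
              gcongr; exact hrec k
          _ = _ := by
              rw [sum_mul]
              refine sum_congr rfl fun j hj => ?_
              rw [← pow_sub_mul_pow t (mem_range_succ_iff.1 hj)]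
              ring
    _ = ∑ j ∈ range N, ∑ m ∈ range (N - j), (m + 1) * b m * t ^ m * (d j * t ^ j) :=
        sum_range_diag_flip N fun j m => ((m : ℕ) + 1) * b m * t ^ m * (d j * t ^ j)
    _ ≤ ∑ j ∈ range N, ∑ m ∈ range N, (m + 1) * b m * t ^ m * (d j * t ^ j) :=
        sum_le_sum fun j _ => sum_le_sum_of_subset_of_nonneg (range_subset_range.2 (by omega))
          fun m _ _ => hterm j m
    _ ≤ ∑ j ∈ range (N + 1), ∑ m ∈ range N, (m + 1) * b m * t ^ m * (d j * t ^ j) :=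
        sum_le_sum_of_subset_of_nonneg (range_subset_range.2 (by omega))
          fun j _ _ => sum_nonneg fun m _ => hterm j m
    _ = _ := by rw [sum_mul_sum, sum_comm]

lemma sum_range_le_mul_exp_of_succ_mul_le {b d : ℕ → ℝ} (hb : ∀ m, 0 ≤ b m)
    (hd : ∀ k, 0 ≤ d k)
    (hrec : ∀ k : ℕ, (k + 1) * d (k + 1) ≤
      ∑ j ∈ range (k + 1), ((k - j : ℕ) + 1) * b (k - j) * d j)
    (N : ℕ) : ∑ k ∈ range (N + 1), d k ≤ d 0 * Real.exp (∑ m ∈ range N, b m) := by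
  have hD (t : ℝ) : HasDerivAt (fun x => ∑ k ∈ range (N + 1), d k * x ^ k)
      (∑ k ∈ range N, (k + 1) * d (k + 1) * t ^ k) t := by
    refine (HasDerivAt.fun_sum (u := range (N + 1)) fun k _ =>
      (hasDerivAt_pow k t).const_mul (d k)).congr_deriv ?_
    simp [sum_range_succ', mul_comm, mul_left_comm]
  have hB (t : ℝ) : HasDerivAt (fun x => ∑ m ∈ range N, b m * x ^ (m + 1))
      (∑ m ∈ range N, (m + 1) * b m * t ^ m) t := by
    refine (HasDerivAt.fun_sum (u := range N) fun m _ =>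
      (hasDerivAt_pow (m + 1) t).const_mul (b m)).congr_deriv (sum_congr rfl fun m _ => ?_)
    push_cast
    ring
  simpa [sum_range_succ'] using le_mul_exp_sub_of_deriv_le_mul zero_le_one hD hB
    fun t ht => sum_succ_mul_pow_le_mul_of_succ_mul_le hb hd hrec N ht.1

lemma IsMARec.succ_mul_eq {a c : ℕ → ℂ} (h : IsMARec a c) (k : ℕ) :
    ((k : ℂ) + 1) * c (k + 1) =
      ∑ j ∈ range (k + 1), ((k - j : ℕ) + 1) * a (k - j + 1) * c j := by
  rw [h.2 k, mul_sum]
  refine sum_congr rfl fun j hj => ?_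
  have hjk : j ≤ k := mem_range_succ_iff.1 hj
  rw [Nat.sub_add_comm hjk, Nat.cast_sub hjk]
  field_simp
  ring

lemma IsMARec.succ_mul_weight_mul_norm_le {a c : ℕ → ℂ} (h : IsMARec a c) {w : ℕ → ℝ}
    (hw : ∀ k, 0 ≤ w k) (hmul : ∀ i j, w (i + j) ≤ w i * w j) (k : ℕ) :
    (k + 1) * (w (k + 1) * ‖c (k + 1)‖) ≤
      ∑ j ∈ range (k + 1),
        ((k - j : ℕ) + 1) * (w (k - j + 1) * ‖a (k - j + 1)‖) * (w j * ‖c j‖) := by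
  calc (k + 1) * (w (k + 1) * ‖c (k + 1)‖) = w (k + 1) * ‖((k : ℂ) + 1) * c (k + 1)‖ := by
        rw [norm_mul]; norm_cast; ring
    _ ≤ w (k + 1) * ∑ j ∈ range (k + 1), ((k - j : ℕ) + 1) * ‖a (k - j + 1)‖ * ‖c j‖ := by
        rw [h.succ_mul_eq]
        refine mul_le_mul_of_nonneg_left ((norm_sum_le _ _).trans (sum_le_sum fun j _ => ?_))
          (hw _)
        rw [norm_mul, norm_mul]; norm_cast
    _ ≤ _ := by
        rw [mul_sum]
        refine sum_le_sum fun j hj => ?_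
        have hw' : w (k + 1) ≤ w (k - j + 1) * w j := by
          have hjk := mem_range_succ_iff.1 hj
          simpa [show k - j + 1 + j = k + 1 by omega] using hmul (k - j + 1) j
        convert mul_le_mul_of_nonneg_left hw'
          (by positivity : (0 : ℝ) ≤ ((k - j : ℕ) + 1) * ‖a (k - j + 1)‖ * ‖c j‖) using 1 <;> ring

/-- If `∑_{k=1}^∞ (1+k)³ |a_k| < ∞` and `(c_k)` is obtained from `(a_k)` by the MA recursion,
then `∑_{k=0}^∞ (1+k)³ |c_k| ≤ exp (∑_{k=1}^∞ (1+k)³ |a_k|)`; in particular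
`sup_{k ≥ 0} k³ |c_k| < ∞`. -/
theorem statement13 (a c : ℕ → ℂ)
    (ha : Summable fun k : ℕ => (1 + ((k : ℝ) + 1)) ^ 3 * ‖a (k + 1)‖)
    (hrec : IsMARec a c) :
    (∑' k : ℕ, ENNReal.ofReal ((1 + (k : ℝ)) ^ 3 * ‖c k‖) ≤
      ENNReal.ofReal (Real.exp (∑' k : ℕ, (1 + ((k : ℝ) + 1)) ^ 3 * ‖a (k + 1)‖))) ∧
    ∃ C : ℝ, ∀ k : ℕ, (k : ℝ) ^ 3 * ‖c k‖ ≤ C := by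
  set A := ∑' k : ℕ, (1 + ((k : ℝ) + 1)) ^ 3 * ‖a (k + 1)‖
  set d : ℕ → ℝ := fun k => (1 + (k : ℝ)) ^ 3 * ‖c k‖
  set b : ℕ → ℝ := fun m => (1 + ((m : ℝ) + 1)) ^ 3 * ‖a (m + 1)‖
  have hd (k : ℕ) : 0 ≤ d k := by positivity
  have hdrec (k : ℕ) : (k + 1) * d (k + 1) ≤
      ∑ j ∈ range (k + 1), ((k - j : ℕ) + 1) * b (k - j) * d j := by
    simpa [d, b, Nat.cast_succ] using
      hrec.succ_mul_weight_mul_norm_le (w := fun k => (1 + (k : ℝ)) ^ 3) (fun k => by positivity)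
        (fun i j => by push_cast; exact one_add_add_pow_le_mul i.cast_nonneg j.cast_nonneg 3) k
  have hpartial (N : ℕ) : ∑ k ∈ range (N + 1), d k ≤ Real.exp A := by
    refine (sum_range_le_mul_exp_of_succ_mul_le (fun m => by positivity) hd hdrec N).trans ?_
    simpa [d, hrec.1] using ha.sum_le_tsum _ fun m _ => by positivity
  refine ⟨ENNReal.tsum_le_of_sum_range_le fun N => ?_, Real.exp A, fun k => ?_⟩
  · rw [← ENNReal.ofReal_sum_of_nonneg fun k _ => hd k]
    exact ENNReal.ofReal_le_ofReal <| (sum_le_sum_of_subset_of_nonneg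
      (range_subset_range.2 N.le_succ) fun k _ _ => hd k).trans (hpartial N)
  · calc (k : ℝ) ^ 3 * ‖c k‖ ≤ (1 + (k : ℝ)) ^ 3 * ‖c k‖ := by gcongr; linarith
      _ ≤ ∑ j ∈ range (k + 1), d j := single_le_sum (fun j _ => hd j) (self_mem_range_succ k)
      _ ≤ Real.exp A := hpartial k
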